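/- Let K be a bounded self-adjoint operator on a complex Hilbert space H, M a closed subspace of H, N = M^⊥, and let T = P_M K|_M, Γ = P_N K|_M, and S = P_N K|_N be the compressions of K. Assume T ≥ 0. Then for every ε > 0 the operator T + εI_M is invertible on M, and K + εI_H ≥ 0 if and only if S + εI_N − Γ (T + εI_M)^{-1} Γ* ≥ 0 as an operator on N. -/

import Mathlib

/-! For `ε > 0` the operator `A = T + ε` satisfies `re ⟪A x, x⟫ ≥ ε ‖x‖²`, so it is invertible.
Writing `x = m + n` with `m ∈ M`, `n ∈ Mᗮ` and completing the square,
`⟪(K + ε) x, x⟫ = ⟪A (m + A⁻¹ Γ* n), m + A⁻¹ Γ* n⟫ + ⟪(S + ε - Γ A⁻¹ Γ*) n, n⟫`.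
The first term is nonnegative and vanishes for `m = -A⁻¹ Γ* n`, which gives both directions. -/

open scoped InnerProductSpace

namespace ContinuousLinearMap

section Compression

variable {𝕜 E : Type*} [RCLike 𝕜] [NormedAddCommGroup E] [InnerProductSpace 𝕜 E]

noncomputable def compression (K : E →L[𝕜] E) (U V : Submodule 𝕜 E) [V.HasOrthogonalProjection] :
    U →L[𝕜] V :=
  V.orthogonalProjectionOnto ∘L K ∘L U.subtypeL

variable (K : E →L[𝕜] E) {U V : Submodule 𝕜 E} [V.HasOrthogonalProjection]

theorem inner_compression_left (u : U) (v : V) : ⟪compression K U V u, v⟫_𝕜 = ⟪K u, v⟫_𝕜 :=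
  V.inner_orthogonalProjectionOnto_eq_of_mem_right v (K u)

theorem inner_compression_right (u : U) (v : V) :
    ⟪v, compression K U V u⟫_𝕜 = ⟪(v : E), K u⟫_𝕜 :=
  V.inner_orthogonalProjectionOnto_eq_of_mem_left v (K u)

theorem _root_.LinearMap.IsSymmetric.compression {K : E →L[𝕜] E}
    (hK : (K : E →ₗ[𝕜] E).IsSymmetric) :
    (compression K V V).IsSymmetric := fun u v =>
  (inner_compression_left K u v).trans ((hK u v).trans (inner_compression_right K v u).symm)

theorem compression_add_smul_one_self (c : 𝕜) :
    compression (K + c • 1) V V = compression K V V + c • 1 := by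
  ext v; simp [compression]

theorem compression_add_smul_one_orthogonal (c : 𝕜) :
    compression (K + c • 1) V Vᗮ = compression K V Vᗮ := by
  ext v; simp [compression]

theorem inner_apply_add_eq_inner_compression {K : E →L[𝕜] E} (hK : K.IsSymmetric)
    (m : V) (n : Vᗮ) :
    ⟪K (m + n), m + n⟫_𝕜 = ⟪compression K V V m, m⟫_𝕜 + ⟪compression K V Vᗮ m, n⟫_𝕜
      + ⟪n, compression K V Vᗮ m⟫_𝕜 + ⟪compression K Vᗮ Vᗮ n, n⟫_𝕜 := by
  have hnm : ⟪K n, m⟫_𝕜 = ⟪(n : E), K m⟫_𝕜 := hK n m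
  rw [inner_compression_left, inner_compression_left, inner_compression_left,
    inner_compression_right, map_add, inner_add_left, inner_add_right, inner_add_right, hnm]
  abel

end Compression

section Positive

variable {𝕜 F : Type*} [RCLike 𝕜] [NormedAddCommGroup F] [InnerProductSpace 𝕜 F]

theorem IsPositive.add_smul_one {T : F →L[𝕜] F} (hT : T.IsPositive) {ε : ℝ} (hε : 0 ≤ ε) :
    (T + (ε : 𝕜) • (1 : F →L[𝕜] F)).IsPositive :=
  hT.add (isPositive_one.smul_of_nonneg (RCLike.ofReal_nonneg.mpr hε))

theorem IsPositive.isUnit_add_smul_one [CompleteSpace F] {T : F →L[𝕜] F} (hT : T.IsPositive)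
    {ε : ℝ} (hε : 0 < ε) : IsUnit (T + (ε : 𝕜) • (1 : F →L[𝕜] F)) := by
  refine isUnit_of_forall_le_norm_inner_map _ (c := ⟨ε, hε.le⟩) hε fun x => ?_
  calc ‖x‖ ^ 2 * ε ≤ RCLike.re ⟪T x, x⟫_𝕜 + ε * ‖x‖ ^ 2 := by
        linarith [hT.re_inner_nonneg_left x]
    _ = RCLike.re ⟪(T + (ε : 𝕜) • (1 : F →L[𝕜] F)) x, x⟫_𝕜 := by
        simp [inner_add_left, inner_smul_left, inner_self_eq_norm_sq_to_K]
    _ ≤ _ := RCLike.re_le_norm _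

end Positive

section SchurComplement

variable {𝕜 F G : Type*} [RCLike 𝕜]
  [NormedAddCommGroup F] [InnerProductSpace 𝕜 F] [CompleteSpace F]
  [NormedAddCommGroup G] [InnerProductSpace 𝕜 G] [CompleteSpace G]

noncomputable def schurComplement (A : F →L[𝕜] F) (B : F →L[𝕜] G) (S : G →L[𝕜] G) :
    G →L[𝕜] G :=
  S - B ∘L Ring.inverse A ∘L adjoint B

theorem inner_add_inner_schurComplement {A : F →L[𝕜] F} (hA : A.IsSymmetric) (hu : IsUnit A)
    (B : F →L[𝕜] G) (S : G →L[𝕜] G) (m : F) (n : G) :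
    ⟪A m, m⟫_𝕜 + ⟪B m, n⟫_𝕜 + ⟪n, B m⟫_𝕜 + ⟪S n, n⟫_𝕜 =
      ⟪A (m + Ring.inverse A (adjoint B n)), m + Ring.inverse A (adjoint B n)⟫_𝕜
        + ⟪schurComplement A B S n, n⟫_𝕜 := by
  replace hA : ∀ x y, ⟪A x, y⟫_𝕜 = ⟪x, A y⟫_𝕜 := hA
  set w := Ring.inverse A (adjoint B n)
  have hw : A w = adjoint B n := DFunLike.congr_fun (Ring.mul_inverse_cancel A hu) (adjoint B n)
  have h1 : ⟪A m, w⟫_𝕜 = ⟪B m, n⟫_𝕜 := by rw [hA m w, hw, adjoint_inner_right]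
  have h2 : ⟪A w, m⟫_𝕜 = ⟪n, B m⟫_𝕜 := by rw [hw, adjoint_inner_left]
  have h3 : ⟪B w, n⟫_𝕜 = ⟪A w, w⟫_𝕜 := by rw [← adjoint_inner_right, ← hw, ← hA w w]
  have h4 : ⟪schurComplement A B S n, n⟫_𝕜 = ⟪S n, n⟫_𝕜 - ⟪A w, w⟫_𝕜 := by
    rw [schurComplement, sub_apply, inner_sub_left, comp_apply, comp_apply, h3]
  rw [map_add, inner_add_left, inner_add_right, inner_add_right, h1, h2, h4]
  ring

end SchurComplement

variable {𝕜 E : Type*} [RCLike 𝕜] [NormedAddCommGroup E] [InnerProductSpace 𝕜 E]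
  [CompleteSpace E]

theorem isPositive_iff_isPositive_schurComplement {K : E →L[𝕜] E} (hK : IsSelfAdjoint K)
    (U : Submodule 𝕜 E) [CompleteSpace U] (hT : (compression K U U).IsPositive)
    (hu : IsUnit (compression K U U)) :
    K.IsPositive ↔ (schurComplement (compression K U U) (compression K U Uᗮ)
      (compression K Uᗮ Uᗮ)).IsPositive := by
  set T := compression K U U
  set Γ := compression K U Uᗮ
  set R := schurComplement T Γ (compression K Uᗮ Uᗮ)
  set w : Uᗮ → U := fun n => Ring.inverse T (adjoint Γ n)
  have key (m : U) (n : Uᗮ) :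
      ⟪K (m + n), (m + n : E)⟫_𝕜 = ⟪T (m + w n), m + w n⟫_𝕜 + ⟪R n, n⟫_𝕜 :=
    (inner_apply_add_eq_inner_compression hK.isSymmetric m n).trans
      (inner_add_inner_schurComplement hT.isSymmetric hu _ _ m n)
  constructor
  · intro hKpos
    have hR : IsSelfAdjoint R :=
      (isSelfAdjoint_iff_isSymmetric.mpr hK.isSymmetric.compression).sub
      (hT.isSelfAdjoint.ringInverse.conj_adjoint Γ)
    refine ⟨hR.isSymmetric, fun n => ?_⟩
    have := hKpos.re_inner_nonneg_left ((-w n : U) + n : E)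
    rwa [key, neg_add_cancel, map_zero, inner_zero_left, zero_add] at this
  · intro hR
    refine ⟨hK.isSymmetric, fun x => ?_⟩
    have hx : (U.orthogonalProjectionOnto x : E) + (Uᗮ.orthogonalProjectionOnto x : E) = x :=
      U.starProjection_add_starProjection_orthogonal x
    rw [reApplyInnerSelf_apply, ← hx, key, map_add]
    exact add_nonneg (hT.re_inner_nonneg_left _) (hR.re_inner_nonneg_left _)

end ContinuousLinearMap

open ContinuousLinearMap

theorem stmt_3
    {H : Type*} [NormedAddCommGroup H] [InnerProductSpace ℂ H] [CompleteSpace H]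
    (K : H →L[ℂ] H) (hKsa : IsSelfAdjoint K)
    (M : Submodule ℂ H) [CompleteSpace M]
    (T : M →L[ℂ] M) (Γ : M →L[ℂ] Mᗮ) (S : Mᗮ →L[ℂ] Mᗮ)
    (hT : T = (Submodule.orthogonalProjectionOnto M).comp (K.comp M.subtypeL))
    (hΓ : Γ = (Submodule.orthogonalProjectionOnto Mᗮ).comp (K.comp M.subtypeL))
    (hS : S = (Submodule.orthogonalProjectionOnto Mᗮ).comp (K.comp Mᗮ.subtypeL))
    (hTpos : T.IsPositive) :
    ∀ ε : ℝ, 0 < ε →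
      IsUnit (T + (ε : ℂ) • (1 : M →L[ℂ] M)) ∧
        ((K + (ε : ℂ) • (1 : H →L[ℂ] H)).IsPositive ↔
          (S + (ε : ℂ) • (1 : Mᗮ →L[ℂ] Mᗮ) -
            Γ.comp ((Ring.inverse (T + (ε : ℂ) • (1 : M →L[ℂ] M))).comp
              (ContinuousLinearMap.adjoint Γ))).IsPositive) := by
  intro ε hε
  refine ⟨hTpos.isUnit_add_smul_one hε, ?_⟩
  subst hT hΓ hS
  have hKε : IsSelfAdjoint (K + (ε : ℂ) • 1) :=
    hKsa.add (isPositive_one.smul_of_nonneg (RCLike.ofReal_nonneg.mpr hε.le)).isSelfAdjoint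
  have := isPositive_iff_isPositive_schurComplement hKε M
    (by rw [compression_add_smul_one_self]; exact hTpos.add_smul_one hε.le)
    (by rw [compression_add_smul_one_self]; exact hTpos.isUnit_add_smul_one hε)
  rwa [compression_add_smul_one_self, compression_add_smul_one_self,
    compression_add_smul_one_orthogonal] at this
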